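/- Let Ω and Σ be SPD real n×n matrices, let L be an invertible real n×n matrix with Ω = L Lᵀ, and let k > 0. Then Λ_Kyle := k·(Lᵀ)⁻¹ √(Lᵀ Σ L) L⁻¹ is the unique SPD real n×n matrix Λ satisfying Λ Ω Λ = k²·Σ. -/

import Mathlib

open Matrix
open Classical in
/-- The unique positive semidefinite square root of a positive semidefinite
real matrix (defined as `0` on matrices that are not positive semidefinite). -/
noncomputable def psdSqrt {n : ℕ} (A : Matrix (Fin n) (Fin n) ℝ) : Matrix (Fin n) (Fin n) ℝ :=
  if h : A.PosSemidef then
    h.1.eigenvectorUnitary.1 * diagonal ((↑) ∘ (√·) ∘ h.1.eigenvalues) *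
      (star h.1.eigenvectorUnitary : Matrix (Fin n) (Fin n) ℝ)
  else 0

/-!
Whitening by `L` reduces the equation to a square-root problem. Put `B = k⁻¹ Lᵀ Λ L`. Congruence by
the invertible `L` preserves positive definiteness, and `Lᵀ (Λ L Lᵀ Λ) L = (Lᵀ Λ L)²`, so
`Λ Ω Λ = k² Σ` holds iff `B² = Lᵀ Σ L`. A positive definite solution `Λ` therefore has `B` equal to
the unique positive square root of `Lᵀ Σ L`, and `Λ_Kyle` is precisely the matrix whose `B` is
that root.
-/

open scoped MatrixOrder

lemma psdSqrt_eq_cfcSqrt {n : ℕ} {A : Matrix (Fin n) (Fin n) ℝ} (hA : A.PosSemidef) :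
    psdSqrt A = CFC.sqrt A := by
  rw [CFC.sqrt_eq_cfc, cfc_nnreal_eq_real _ A hA.nonneg, hA.1.cfc_eq, psdSqrt, dif_pos hA]
  simp only [IsHermitian.cfc, Unitary.conjStarAlgAut_apply]
  congr 3
  funext i
  simp [Real.coe_toNNReal', max_eq_left (hA.eigenvalues_nonneg i)]

namespace Matrix

variable {m : Type*} [Fintype m]

lemma transpose_mul_mul_mul_gram_mul {R : Type*} [CommSemiring R] (L X : Matrix m m R) :
    Lᵀ * (X * (L * Lᵀ) * X) * L = Lᵀ * X * L * (Lᵀ * X * L) := by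
  simp only [Matrix.mul_assoc]

section Field

variable [DecidableEq m] {K : Type*} [Field K] {L : Matrix m m K} {k : K}

lemma smul_transpose_mul_mul_injective (hL : IsUnit L) (hk : k ≠ 0) :
    Function.Injective fun X : Matrix m m K ↦ k • (Lᵀ * X * L) := by
  intro X Y hXY
  simpa [smul_right_inj hk, hL.mul_left_inj, ((isUnit_transpose L).2 hL).mul_right_inj] using hXY

lemma inv_smul_transpose_mul_smul_inv_mul (hL : IsUnit L) (hk : k ≠ 0) (X : Matrix m m K) :
    k⁻¹ • (Lᵀ * (k • ((Lᵀ)⁻¹ * X * L⁻¹)) * L) = X := by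
  have hLT : IsUnit Lᵀ.det := by rwa [det_transpose, ← isUnit_iff_isUnit_det]
  rw [Matrix.mul_smul, Matrix.smul_mul, inv_smul_smul₀ hk, ← Matrix.mul_assoc, ← Matrix.mul_assoc,
    mul_nonsing_inv _ hLT, Matrix.one_mul, Matrix.mul_assoc, nonsing_inv_mul _ ((isUnit_iff_isUnit_det L).1 hL), Matrix.mul_one]

lemma mul_mul_transpose_mul_eq_smul_iff (hL : IsUnit L) (hk : k ≠ 0) (Λ S : Matrix m m K) :
    Λ * (L * Lᵀ) * Λ = k ^ 2 • S ↔
      k⁻¹ • (Lᵀ * Λ * L) * (k⁻¹ • (Lᵀ * Λ * L)) = Lᵀ * S * L := by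
  rw [← (smul_transpose_mul_mul_injective hL (inv_ne_zero (pow_ne_zero 2 hk))).eq_iff]
  simp only [transpose_mul_mul_mul_gram_mul, Matrix.mul_smul, Matrix.smul_mul, smul_smul]
  rw [inv_mul_cancel₀ (pow_ne_zero 2 hk), one_smul, ← mul_inv, pow_two]

end Field

section Real

variable [DecidableEq m] {L X : Matrix m m ℝ}

lemma posDef_transpose_mul_mul_iff (hL : IsUnit L) : (Lᵀ * X * L).PosDef ↔ X.PosDef := by
  simpa [star_eq_conjTranspose] using hL.posDef_star_left_conjugate_iff (x := X)

lemma posDef_smul_transpose_mul_mul_iff (hL : IsUnit L) {k : ℝ} (hk : 0 < k) :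
    (k • (Lᵀ * X * L)).PosDef ↔ X.PosDef := by
  refine ⟨fun h ↦ (posDef_transpose_mul_mul_iff hL).1 ?_,
    fun h ↦ ((posDef_transpose_mul_mul_iff hL).2 h).smul hk⟩
  simpa [inv_smul_smul₀ hk.ne'] using h.smul (inv_pos.2 hk)

end Real

end Matrix

theorem stmt12_general {n : ℕ} (W S L : Matrix (Fin n) (Fin n) ℝ)
    (hS : S.PosDef) (hL : IsUnit L.det)
    (hfac : W = L * Lᵀ) (k : ℝ) (hk : 0 < k)
    (LamK : Matrix (Fin n) (Fin n) ℝ)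
    (hLamK : LamK = k • ((Lᵀ)⁻¹ * psdSqrt (Lᵀ * S * L) * L⁻¹)) :
    LamK.PosDef ∧ LamK * W * LamK = (k ^ 2) • S ∧
    ∀ Lam : Matrix (Fin n) (Fin n) ℝ, Lam.PosDef → Lam * W * Lam = (k ^ 2) • S →
      Lam = LamK := by
  have hLu : IsUnit L := (isUnit_iff_isUnit_det L).2 hL
  have hM : (Lᵀ * S * L).PosDef := (posDef_transpose_mul_mul_iff hLu).2 hS
  have hR : (CFC.sqrt (Lᵀ * S * L)).PosDef := hM.isStrictlyPositive.sqrt.posDef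
  have hLamK_whitened : k⁻¹ • (Lᵀ * LamK * L) = CFC.sqrt (Lᵀ * S * L) := by
    rw [hLamK, psdSqrt_eq_cfcSqrt hM.posSemidef, inv_smul_transpose_mul_smul_inv_mul hLu hk.ne']
  subst hfac
  refine ⟨?_, ?_, fun Lam hLam hEq ↦ ?_⟩
  · exact (posDef_smul_transpose_mul_mul_iff hLu (inv_pos.2 hk)).1 (hLamK_whitened ▸ hR)
  · rw [mul_mul_transpose_mul_eq_smul_iff hLu hk.ne', hLamK_whitened]
    exact CFC.sqrt_mul_sqrt_self _ hM.posSemidef.nonneg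
  · apply smul_transpose_mul_mul_injective hLu (inv_ne_zero hk.ne')
    beta_reduce
    rw [hLamK_whitened, eq_comm, CFC.sqrt_eq_iff _ _ hM.posSemidef.nonneg
      ((posDef_smul_transpose_mul_mul_iff hLu (inv_pos.2 hk)).2 hLam).posSemidef.nonneg]
    exact (mul_mul_transpose_mul_eq_smul_iff hLu hk.ne' Lam S).1 hEq

/-- The Kyle estimator: for SPD `Ω`, `Σ` with `Ω = L Lᵀ` (`L` invertible) and `k > 0`,
`Λ_Kyle = k (Lᵀ)⁻¹ √(Lᵀ Σ L) L⁻¹` is the unique SPD matrix `Λ` with `Λ Ω Λ = k² Σ`. -/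
theorem stmt12 {n : ℕ} (W S L : Matrix (Fin n) (Fin n) ℝ)
    (hW : W.PosDef) (hS : S.PosDef) (hL : IsUnit L.det)
    (hfac : W = L * Lᵀ) (k : ℝ) (hk : 0 < k)
    (LamK : Matrix (Fin n) (Fin n) ℝ)
    (hLamK : LamK = k • ((Lᵀ)⁻¹ * psdSqrt (Lᵀ * S * L) * L⁻¹)) :
    LamK.PosDef ∧ LamK * W * LamK = (k ^ 2) • S ∧
    ∀ Lam : Matrix (Fin n) (Fin n) ℝ, Lam.PosDef → Lam * W * Lam = (k ^ 2) • S →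
      Lam = LamK :=
  stmt12_general W S L hS hL hfac k hk LamK hLamK
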